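/- Let $\mathcal{O}$ be the ring of integers of a nonarchimedean local field with maximal ideal $\mathfrak{p}$, uniformiser $\varpi$, $n \geq 2$, and $m \geq 0$. Then $\mathrm{GL}_n(\mathcal{O}) = \bigsqcup_{\ell=0}^{m} K_0(\mathfrak{p}^m) \begin{pmatrix} 1_{n-1} & 0 \\ \varpi^{\ell} e_{n-1} & 1 \end{pmatrix} K_0(\mathfrak{p}^m)$, i.e., the double cosets of $K_0(\mathfrak{p}^m)$ in $\mathrm{GL}_n(\mathcal{O})$ are represented exactly once by the matrices $\begin{pmatrix} 1_{n-1} & 0 \\ \varpi^{\ell} e_{n-1} & 1 \end{pmatrix}$ for $\ell \in \{0,\ldots,m\}$. -/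

import Mathlib

/-!
The double coset of `g` is detected by the ideal `I(g) = 𝔭 ^ m + (g_{nj} : j ≠ n)`. For
`k ∈ K₀(𝔭 ^ m)`, the last row of `k g` is `k_{nn}` times that of `g` modulo `𝔭 ^ m`, and the
off-diagonal entries of the last row of `g k` are combinations of those of `g` modulo `𝔭 ^ m`;
since `K₀(𝔭 ^ m)` is a group, `I` is constant on double cosets. As
`I(1 + ϖ ^ ℓ E_{n,n-1}) = 𝔭 ^ ℓ`, the representatives lie in distinct double cosets.

Conversely, if the ideal of `g` is `𝔭 ^ ℓ` with `ℓ < m`, the last row of `g` is `c e_n + ϖ ^ ℓ b`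
with `c` a unit and, after a column operation inside `K₀(𝔭 ^ m)`, `b_{n-1}` a unit. The matrix
`k₂` with last row `c e_n`, row `n - 1` equal to `b` and all other rows those of the identity is
then invertible, lies in `K₀(𝔭 ^ m)`, and `(1 + ϖ ^ ℓ E_{n,n-1}) k₂` has the same last row as `g`,
so that `g ((1 + ϖ ^ ℓ E_{n,n-1}) k₂)⁻¹` has last row `e_n`. If `ℓ = m`, then `g ∈ K₀(𝔭 ^ m)`.
-/

open IsLocalRing DoubleCoset

namespace Matrix

variable {ι R : Type*} [CommRing R]

def offDiagRowIdeal (J : Ideal R) (r : ι) (A : Matrix ι ι R) : Ideal R :=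
  J ⊔ Ideal.span (Set.range fun j : {j // j ≠ r} => A r j)

variable {J I : Ideal R} {r : ι}

theorem offDiagRowIdeal_le_iff {A : Matrix ι ι R} :
    offDiagRowIdeal J r A ≤ I ↔ J ≤ I ∧ ∀ j ≠ r, A r j ∈ I := by
  simp [offDiagRowIdeal, Ideal.span_le, Set.range_subset_iff]

theorem le_offDiagRowIdeal (A : Matrix ι ι R) : J ≤ offDiagRowIdeal J r A := le_sup_left

theorem apply_mem_offDiagRowIdeal (A : Matrix ι ι R) {j : ι} (hj : j ≠ r) :
    A r j ∈ offDiagRowIdeal J r A :=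
  (offDiagRowIdeal_le_iff.1 le_rfl).2 j hj

variable [DecidableEq ι]

theorem offDiagRowIdeal_transvection {s : ι} (hrs : r ≠ s) (c : R) :
    offDiagRowIdeal J r (Matrix.transvection r s c) = J ⊔ Ideal.span {c} := by
  refine le_antisymm (offDiagRowIdeal_le_iff.2 ⟨le_sup_left, fun j hj => ?_⟩)
    (sup_le (le_offDiagRowIdeal _) (Ideal.span_le.2 (Set.singleton_subset_iff.2 ?_)))
  · simp only [Matrix.transvection, add_apply, one_apply_ne' hj, single_apply, true_and,
      zero_add]
    split_ifs
    exacts [Ideal.mem_sup_right (Ideal.mem_span_singleton_self c), zero_mem _]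
  · simpa [Matrix.transvection, one_apply_ne hrs] using apply_mem_offDiagRowIdeal (J := J)
      (Matrix.transvection r s c) hrs.symm

variable [Fintype ι]

theorem mul_apply_sub_mem {A : Matrix ι ι R} (hA : ∀ j ≠ r, A r j ∈ J) (B : Matrix ι ι R)
    (j : ι) : (A * B) r j - A r r * B r j ∈ J := by
  rw [mul_apply, ← Finset.sum_erase_add _ _ (Finset.mem_univ r), add_sub_cancel_right]
  exact Ideal.sum_mem _ fun i hi => J.mul_mem_right _ (hA i (Finset.ne_of_mem_erase hi))

theorem offDiagRowIdeal_mul_le_left {A : Matrix ι ι R} (hA : ∀ j ≠ r, A r j ∈ J)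
    (B : Matrix ι ι R) :
    offDiagRowIdeal J r (A * B) ≤ offDiagRowIdeal J r B := by
  refine offDiagRowIdeal_le_iff.2 ⟨le_offDiagRowIdeal B, fun j hj => ?_⟩
  rw [← sub_add_cancel ((A * B) r j) (A r r * B r j)]
  exact add_mem (le_offDiagRowIdeal B (mul_apply_sub_mem hA B j))
    (Ideal.mul_mem_left _ _ (apply_mem_offDiagRowIdeal B hj))

theorem offDiagRowIdeal_mul_le_right (A : Matrix ι ι R) {B : Matrix ι ι R}
    (hB : ∀ j ≠ r, B r j ∈ J) :
    offDiagRowIdeal J r (A * B) ≤ offDiagRowIdeal J r A := by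
  refine offDiagRowIdeal_le_iff.2
    ⟨le_offDiagRowIdeal A, fun j hj => Ideal.sum_mem _ fun i _ => ?_⟩
  by_cases hi : i = r
  · subst hi
    exact Ideal.mul_mem_left _ _ (le_offDiagRowIdeal A (hB j hj))
  · exact Ideal.mul_mem_right _ _ (apply_mem_offDiagRowIdeal A hi)

theorem det_mem_of_row_mem {A : Matrix ι ι R} (hA : ∀ j, A r j ∈ I) : A.det ∈ I := by
  have h := congr_fun (congr_fun (mul_adjugate A) r) r
  rw [mul_apply, smul_apply, one_apply_eq, smul_eq_mul, mul_one] at h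
  exact h ▸ Ideal.sum_mem _ fun j _ => I.mul_mem_right _ (hA j)

theorem det_updateRow_one (i : ι) (b : ι → R) :
    (updateRow (1 : Matrix ι ι R) i b).det = b i := by
  rw [← transpose_one, updateRow_transpose, det_transpose, ← cramer_apply, cramer_one,
    Module.End.one_apply]

end Matrix

namespace Matrix.GeneralLinearGroup

variable {ι R : Type*} [Fintype ι] [DecidableEq ι] [CommRing R] {J : Ideal R} {r : ι}

-- `K₀(J)`, with the last row of the paper replaced by row `r`
def gammaZero (J : Ideal R) (r : ι) : Subgroup (GL ι R) where
  carrier := {k | ∀ j ≠ r, (k : Matrix ι ι R) r j ∈ J}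
  one_mem' j hj := by simp [one_apply_ne' hj]
  mul_mem' {k k'} hk hk' j hj := by
    have h := (offDiagRowIdeal_mul_le_left hk (k' : Matrix ι ι R)).trans
      (offDiagRowIdeal_le_iff.2 ⟨le_rfl, hk'⟩)
    exact Units.val_mul k k' ▸ offDiagRowIdeal_le_iff.1 h |>.2 j hj
  inv_mem' {k} hk j hj := by
    set a := (k : Matrix ι ι R) r r
    set k' := (↑k⁻¹ : Matrix ι ι R)
    have hrow (j : ι) : (1 : Matrix ι ι R) r j - a * k' r j ∈ J := by
      simpa [k'] using mul_apply_sub_mem hk k' j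
    have hunit : 1 - a * k' r r ∈ J := by simpa using hrow r
    have hkill : a * k' r j ∈ J := by simpa [one_apply_ne' hj] using hrow j
    -- `a` is invertible modulo `J`, with inverse `k' r r`
    have h : k' r j = k' r r * (a * k' r j) + (1 - a * k' r r) * k' r j := by ring
    exact h ▸ add_mem (J.mul_mem_left _ hkill) (J.mul_mem_right _ hunit)

theorem offDiagRowIdeal_mul_mul_le {k₁ k₂ : GL ι R} (hk₁ : k₁ ∈ gammaZero J r)
    (hk₂ : k₂ ∈ gammaZero J r) (g : GL ι R) :
    offDiagRowIdeal J r ↑(k₁ * g * k₂) ≤ offDiagRowIdeal J r ↑g := by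
  rw [Units.val_mul, Units.val_mul]
  exact (offDiagRowIdeal_mul_le_right _ hk₂).trans (offDiagRowIdeal_mul_le_left hk₁ _)

theorem offDiagRowIdeal_mul_mul {k₁ k₂ : GL ι R} (hk₁ : k₁ ∈ gammaZero J r)
    (hk₂ : k₂ ∈ gammaZero J r) (g : GL ι R) :
    offDiagRowIdeal J r ↑(k₁ * g * k₂) = offDiagRowIdeal J r ↑g := by
  refine le_antisymm (offDiagRowIdeal_mul_mul_le hk₁ hk₂ g) ?_
  have hg : g = k₁⁻¹ * (k₁ * g * k₂) * k₂⁻¹ := by group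
  conv_lhs => rw [hg]
  exact offDiagRowIdeal_mul_mul_le (inv_mem hk₁) (inv_mem hk₂) _

theorem offDiagRowIdeal_eq_of_mem_doubleCoset {a g : GL ι R}
    (h : g ∈ doubleCoset a (gammaZero J r) (gammaZero J r)) :
    offDiagRowIdeal J r (g : Matrix ι ι R) = offDiagRowIdeal J r (a : Matrix ι ι R) := by
  obtain ⟨k₁, hk₁, k₂, hk₂, rfl⟩ := mem_doubleCoset.1 h
  exact offDiagRowIdeal_mul_mul hk₁ hk₂ a

theorem mul_inv_mem_gammaZero_of_row_eq {A B : GL ι R}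
    (h : (A : Matrix ι ι R) r = (B : Matrix ι ι R) r) : A * B⁻¹ ∈ gammaZero J r := by
  intro j hj
  rw [Units.val_mul, mul_apply, h, ← mul_apply, Units.mul_inv, one_apply_ne' hj]
  exact zero_mem J

noncomputable def transvection {i j : ι} (hij : i ≠ j) (c : R) : GL ι R :=
  mk'' (Matrix.transvection i j c) (by simp [hij])

@[simp]
theorem coe_transvection {i j : ι} (hij : i ≠ j) (c : R) :
    (transvection hij c : Matrix ι ι R) = Matrix.transvection i j c :=
  rfl

theorem transvection_mem_gammaZero {i j : ι} (hij : i ≠ j) {c : R} (hc : i = r → c ∈ J) :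
    transvection hij c ∈ gammaZero J r := by
  intro k hk
  simp only [coe_transvection, Matrix.transvection, add_apply, one_apply_ne' hk, single_apply,
    zero_add]
  split_ifs with h
  exacts [hc h.1, zero_mem J]

theorem mem_doubleCoset_transvection_of_row_eq {s : ι} (hrs : r ≠ s) {t : R} {g : GL ι R}
    (c : Rˣ) (b : ι → R) (hb : ∀ j ≠ r, (g : Matrix ι ι R) r j = t * b j)
    (hbr : (g : Matrix ι ι R) r r = c + t * b r) (hbs : IsUnit (b s)) :
    g ∈ doubleCoset (transvection hrs t) (gammaZero J r) (gammaZero J r) := by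
  set v : Matrix ι ι R := updateRow (updateRow 1 s b) r ((c : R) • (1 : Matrix ι ι R) r)
  have hvr : v r = (c : R) • (1 : Matrix ι ι R) r := updateRow_self
  have hvs : v s = b := by simp only [v, updateRow_ne hrs.symm, updateRow_self]
  have hdet : v.det = c * b s := by
    simp only [v]
    rw [← updateRow_ne (M := 1) (b := b) hrs, det_updateRow_smul, updateRow_eq_self,
      det_updateRow_one]
  set V := mk'' v (hdet ▸ c.isUnit.mul hbs)
  have hV : V ∈ gammaZero J r := fun j hj => by
    simp [V, hvr, one_apply_ne' hj]
  have hrow : (g : Matrix ι ι R) r = ((transvection hrs t * V : GL ι R) : Matrix ι ι R) r := by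
    ext j
    rw [Units.val_mul, coe_transvection, transvection_mul_apply_same, val_mk'', hvr, hvs]
    by_cases hj : j = r
    · subst hj
      simp [hbr]
    · simp [one_apply_ne' hj, hb j hj]
  exact mem_doubleCoset.2 ⟨_, mul_inv_mem_gammaZero_of_row_eq hrow, V, hV, by group⟩

section IsLocalRing

variable [IsLocalRing R]

theorem exists_unit_sub_mem_span (g : GL ι R) {t : R}
    (h : ∀ j ≠ r, (g : Matrix ι ι R) r j ∈ Ideal.span {t}) :
    ∃ c : Rˣ, (g : Matrix ι ι R) r r - c ∈ Ideal.span {t} := by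
  by_cases ht : IsUnit t
  · exact ⟨1, by simp [Ideal.span_singleton_eq_top.2 ht]⟩
  · have htm : Ideal.span {t} ≤ maximalIdeal R :=
      (Ideal.span_singleton_le_iff_mem _).2 ((mem_maximalIdeal t).2 ht)
    -- a row of an invertible matrix over a local ring contains a unit
    have hg : IsUnit ((g : Matrix ι ι R) r r) := by
      by_contra hgr
      refine (mem_maximalIdeal _).1 (det_mem_of_row_mem (r := r) fun j => ?_)
        (isUnits_det_units g)
      by_cases hj : j = r
      · subst hj
        exact (mem_maximalIdeal _).2 hgr
      · exact htm (h j hj)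
    exact ⟨hg.unit, by simp⟩

theorem mem_doubleCoset_transvection {s : ι} (hrs : r ≠ s) {t : R} {g : GL ι R} (b : ι → R)
    (hb : ∀ j ≠ r, (g : Matrix ι ι R) r j = t * b j) {j₀ : ι} (hj₀ : j₀ ≠ r)
    (hu : IsUnit (b j₀)) :
    g ∈ doubleCoset (transvection hrs t) (gammaZero J r) (gammaZero J r) := by
  wlog hs : IsUnit (b s) generalizing g b
  · -- move the unit to column `s` by adding column `j₀` to it
    have hj₀s : j₀ ≠ s := fun h => hs (h ▸ hu)
    set T := transvection hj₀s (1 : R)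
    have hT : T ∈ gammaZero J r := transvection_mem_gammaZero hj₀s fun h => absurd h hj₀
    have hgT := this (g := g * T) (Function.update b s (b s + b j₀)) (fun j hj => ?_)
      (by rwa [Function.update_of_ne hj₀s]) ?_
    · obtain ⟨k₁, hk₁, k₂, hk₂, h⟩ := mem_doubleCoset.1 hgT
      exact mem_doubleCoset.2 ⟨k₁, hk₁, k₂ * T⁻¹, mul_mem hk₂ (inv_mem hT),
        by rw [← mul_assoc, ← h, mul_inv_cancel_right]⟩
    · by_cases hjs : j = s
      · subst hjs
        simp [T, hb j hj, hb j₀ hj₀, mul_add]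
      · simp [T, hjs, hb j hj]
    · rw [Function.update_self]
      by_contra hsum
      have h := sub_mem ((mem_maximalIdeal _).2 hsum) ((mem_maximalIdeal _).2 hs)
      exact (mem_maximalIdeal _).1 (by simpa using h) hu
  obtain ⟨c, hc⟩ := exists_unit_sub_mem_span g fun j hj =>
    hb j hj ▸ Ideal.mem_span_singleton'.2 ⟨b j, mul_comm _ _⟩
  obtain ⟨a, ha⟩ := Ideal.mem_span_singleton'.1 hc
  refine mem_doubleCoset_transvection_of_row_eq hrs c (Function.update b r a) (fun j hj => ?_)
    ?_ (by rwa [Function.update_of_ne hrs.symm])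
  · rw [Function.update_of_ne hj, hb j hj]
  · rw [Function.update_self, mul_comm, ha, add_sub_cancel]

end IsLocalRing

end Matrix.GeneralLinearGroup

namespace IsDiscreteValuationRing

variable {𝒪 : Type*} [CommRing 𝒪] [IsDomain 𝒪] [IsDiscreteValuationRing 𝒪]

theorem maximalIdeal_pow_le_iff {k ℓ : ℕ} :
    IsLocalRing.maximalIdeal 𝒪 ^ k ≤ IsLocalRing.maximalIdeal 𝒪 ^ ℓ ↔ ℓ ≤ k := by
  rw [← idealOrderIsoENat_symm_apply_coe, ← idealOrderIsoENat_symm_apply_coe,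
    OrderIso.le_iff_le]
  exact Nat.cast_le (α := ℕ∞)

theorem maximalIdeal_pow_injective :
    Function.Injective (IsLocalRing.maximalIdeal 𝒪 ^ · : ℕ → Ideal 𝒪) := fun _ _ h =>
  le_antisymm (maximalIdeal_pow_le_iff.1 h.ge) (maximalIdeal_pow_le_iff.1 h.le)

theorem exists_eq_maximalIdeal_pow_of_le {m : ℕ} {I : Ideal 𝒪}
    (h : IsLocalRing.maximalIdeal 𝒪 ^ m ≤ I) :
    ∃ ℓ ≤ m, I = IsLocalRing.maximalIdeal 𝒪 ^ ℓ := by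
  obtain ⟨ϖ, hϖ⟩ := exists_irreducible 𝒪
  have hI : I ≠ ⊥ := ne_bot_of_le_ne_bot (pow_ne_zero m (not_a_field 𝒪)) h
  obtain ⟨ℓ, rfl⟩ := ideal_eq_span_pow_irreducible hI hϖ
  rw [← Ideal.span_singleton_pow, ← hϖ.maximalIdeal_eq] at h ⊢
  exact ⟨ℓ, maximalIdeal_pow_le_iff.1 h, rfl⟩

end IsDiscreteValuationRing

namespace Matrix.GeneralLinearGroup

variable {ι 𝒪 : Type*} [Fintype ι] [DecidableEq ι] [CommRing 𝒪] [IsDomain 𝒪]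
  [IsDiscreteValuationRing 𝒪] {ϖ : 𝒪} {m ℓ : ℕ} {r s : ι}

theorem mem_doubleCoset_transvection_pow_iff (hϖ : Irreducible ϖ) (hrs : r ≠ s) (hℓ : ℓ ≤ m)
    (g : GL ι 𝒪) :
    g ∈ doubleCoset (transvection hrs (ϖ ^ ℓ)) (gammaZero (maximalIdeal 𝒪 ^ m) r)
        (gammaZero (maximalIdeal 𝒪 ^ m) r) ↔
      offDiagRowIdeal (maximalIdeal 𝒪 ^ m) r g = maximalIdeal 𝒪 ^ ℓ := by
  have hpow (k : ℕ) : maximalIdeal 𝒪 ^ k = Ideal.span {ϖ ^ k} := by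
    rw [hϖ.maximalIdeal_eq, Ideal.span_singleton_pow]
  refine ⟨fun h => ?_, fun h => ?_⟩
  · rw [offDiagRowIdeal_eq_of_mem_doubleCoset h, coe_transvection,
      offDiagRowIdeal_transvection hrs, ← hpow,
      sup_eq_right.2 (IsDiscreteValuationRing.maximalIdeal_pow_le_iff.2 hℓ)]
  rcases hℓ.lt_or_eq with hlt | rfl
  · have hdvd (j : ι) (hj : j ≠ r) : ∃ b, b * ϖ ^ ℓ = (g : Matrix ι ι 𝒪) r j :=
      Ideal.mem_span_singleton'.1 (hpow ℓ ▸ h ▸ apply_mem_offDiagRowIdeal _ hj)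
    choose! b hb using hdvd
    -- otherwise the whole row, and hence `𝔭 ^ ℓ`, would lie in `𝔭 ^ (ℓ + 1)`
    obtain ⟨j₀, hj₀, hu⟩ : ∃ j₀ ≠ r, IsUnit (b j₀) := by
      by_contra! hb'
      have hle : offDiagRowIdeal (maximalIdeal 𝒪 ^ m) r g ≤ maximalIdeal 𝒪 ^ (ℓ + 1) := by
        refine offDiagRowIdeal_le_iff.2
          ⟨IsDiscreteValuationRing.maximalIdeal_pow_le_iff.2 hlt, fun j hj => ?_⟩
        rw [← hb j hj, pow_succ']
        exact Ideal.mul_mem_mul ((mem_maximalIdeal _).2 (hb' j hj))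
          (hpow ℓ ▸ Ideal.mem_span_singleton_self _)
      exact (Nat.not_succ_le_self ℓ)
        (IsDiscreteValuationRing.maximalIdeal_pow_le_iff.1 (h ▸ hle))
    exact mem_doubleCoset_transvection hrs b (fun j hj => (hb j hj).symm.trans (mul_comm _ _))
      hj₀ hu
  · have hg : g ∈ gammaZero (maximalIdeal 𝒪 ^ ℓ) r := (offDiagRowIdeal_le_iff.1 h.le).2
    have hT : transvection hrs (ϖ ^ ℓ) ∈ gammaZero (maximalIdeal 𝒪 ^ ℓ) r :=
      transvection_mem_gammaZero hrs fun _ => hpow ℓ ▸ Ideal.mem_span_singleton_self _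
    exact mem_doubleCoset.2 ⟨_, mul_mem hg (inv_mem hT), 1, one_mem _, by group⟩

end Matrix.GeneralLinearGroup

open Matrix Matrix.GeneralLinearGroup in
/-- Double coset decomposition: `GL_n(𝒪) = ⨆_{ℓ=0}^{m} K₀(𝔭^m) (1 0; ϖ^ℓ e_{n-1} 1) K₀(𝔭^m)`,
with each double coset appearing exactly once: every `g ∈ GL_n(𝒪)` lies in exactly one of the
double cosets of the matrices `1 + ϖ^ℓ E_{n,n-1}` for `0 ≤ ℓ ≤ m`. -/
theorem stmt6 (𝒪 : Type*) [CommRing 𝒪] [IsDomain 𝒪] [IsDiscreteValuationRing 𝒪]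
    (ϖ : 𝒪) (hϖ : Irreducible ϖ)
    (n m : ℕ) (hn : 2 ≤ n)
    (K₀ : Set (GL (Fin n) 𝒪))
    (hK₀ : ∀ k : GL (Fin n) 𝒪, k ∈ K₀ ↔
      ∀ j : Fin n, j ≠ (⟨n - 1, by omega⟩ : Fin n) →
        (k : Matrix (Fin n) (Fin n) 𝒪) (⟨n - 1, by omega⟩ : Fin n) j
          ∈ IsLocalRing.maximalIdeal 𝒪 ^ m)
    (g : GL (Fin n) 𝒪) :
    ∃! ℓ : ℕ, ℓ ≤ m ∧ ∃ k₁ ∈ K₀, ∃ k₂ ∈ K₀,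
      (g : Matrix (Fin n) (Fin n) 𝒪) =
        (k₁ : Matrix (Fin n) (Fin n) 𝒪) *
          ((1 : Matrix (Fin n) (Fin n) 𝒪) +
            Matrix.single (⟨n - 1, by omega⟩ : Fin n) (⟨n - 2, by omega⟩ : Fin n)
              (ϖ ^ ℓ)) *
          (k₂ : Matrix (Fin n) (Fin n) 𝒪) := by
  set r : Fin n := ⟨n - 1, by omega⟩
  set s : Fin n := ⟨n - 2, by omega⟩
  have hrs : r ≠ s := by simp [r, s, Fin.ext_iff]; omega
  have hK : K₀ = gammaZero (maximalIdeal 𝒪 ^ m) r := Set.ext hK₀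
  have hcoset (ℓ : ℕ) (hℓ : ℓ ≤ m) :
      (∃ k₁ ∈ K₀, ∃ k₂ ∈ K₀, (g : Matrix (Fin n) (Fin n) 𝒪) = k₁ *
        ((1 : Matrix (Fin n) (Fin n) 𝒪) + Matrix.single r s (ϖ ^ ℓ)) * k₂) ↔
      offDiagRowIdeal (maximalIdeal 𝒪 ^ m) r g = maximalIdeal 𝒪 ^ ℓ := by
    rw [← mem_doubleCoset_transvection_pow_iff hϖ hrs hℓ, mem_doubleCoset, hK]
    simp only [Units.ext_iff, Units.val_mul, coe_transvection, Matrix.transvection,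
      SetLike.mem_coe]
  obtain ⟨ℓ, hℓ, hg⟩ := IsDiscreteValuationRing.exists_eq_maximalIdeal_pow_of_le
    (le_offDiagRowIdeal (r := r) (g : Matrix (Fin n) (Fin n) 𝒪))
  refine ⟨ℓ, ⟨hℓ, (hcoset ℓ hℓ).2 hg⟩, fun ℓ' ⟨hℓ', h⟩ => ?_⟩
  exact IsDiscreteValuationRing.maximalIdeal_pow_injective (((hcoset ℓ' hℓ').1 h).symm.trans hg)
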